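/- Let H be a k-uniform hypergraph with m edges, s ≥ 1 and r > ks integers, and let t be the rank of the signless Laplacian Q(H). Then λ = r − ks is an eigenvalue of Q(H^r_s) with multiplicity at least m − t. -/
import Mathlib


open Matrix BigOperators Finset

variable {V : Type*} [Fintype V] [DecidableEq V]

/-- Incidence matrix of a hypergraph with vertex set `W` and edge set `E`. -/
def inc {W : Type*} [DecidableEq W] (E : Finset (Finset W)) : Matrix W {e // e ∈ E} ℝ :=
  fun v e => if v ∈ (e : Finset W) then 1 else 0

/-- Signless Laplacian matrix `Q = B·Bᵀ`. -/
def Qmat {W : Type*} [Fintype W] [DecidableEq W] (E : Finset (Finset W)) :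
    Matrix W W ℝ := inc E * (inc E)ᵀ

/-- Edge set of the generalized power hypergraph `H^r_s`: each vertex `v` is
blown up into the set `{v} × Fin s` and each edge `e` receives `r - k*s`
additional new vertices indexed by `e`. -/
def powerEdges (E : Finset (Finset V)) (k s r : ℕ) :
    Finset (Finset (V × Fin s ⊕ {e // e ∈ E} × Fin (r - k * s))) :=
  E.attach.image fun (e : {x // x ∈ E}) =>
    ((e.1 ×ˢ (Finset.univ : Finset (Fin s))).image Sum.inl) ∪
      ((Finset.univ : Finset (Fin (r - k * s))).image fun j => Sum.inr (e, j))


set_option linter.unusedVariables false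
set_option maxHeartbeats 1000000

def gEdge (E : Finset (Finset V)) (k s r : ℕ) (e : {x // x ∈ E}) :
    Finset (V × Fin s ⊕ {e // e ∈ E} × Fin (r - k * s)) :=
  ((e.1 ×ˢ (Finset.univ : Finset (Fin s))).image Sum.inl) ∪
    ((Finset.univ : Finset (Fin (r - k * s))).image fun j => Sum.inr (e, j))

lemma powerEdges_eq (E : Finset (Finset V)) (k s r : ℕ) :
    powerEdges E k s r = E.attach.image (gEdge E k s r) := rfl

lemma mem_gEdge_inl (E : Finset (Finset V)) (k s r : ℕ) (e : {x // x ∈ E})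
    (v : V) (i : Fin s) : Sum.inl (v, i) ∈ gEdge E k s r e ↔ v ∈ e.1 := by
  simp [gEdge]

lemma mem_gEdge_inr (E : Finset (Finset V)) (k s r : ℕ) (e f : {x // x ∈ E})
    (j : Fin (r - k * s)) : Sum.inr (f, j) ∈ gEdge E k s r e ↔ f = e := by
  simp [gEdge, eq_comm]

lemma gEdge_injective (E : Finset (Finset V)) (k s r : ℕ) (hpos : 0 < r - k * s) :
    Function.Injective (gEdge E k s r) := by
  intro e e' h
  have j : Fin (r - k * s) := ⟨0, hpos⟩
  have h1 : Sum.inr (e, j) ∈ gEdge E k s r e := (mem_gEdge_inr E k s r e e j).mpr rfl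
  rw [h] at h1
  exact (mem_gEdge_inr E k s r e' e j).mp h1

theorem power_hypergraph_multiplicity (k s r : ℕ) (E : Finset (Finset V))
    (hk : ∀ e ∈ E, e.card = k) (hs : 1 ≤ s) (hr : k * s < r) :
    E.card - (Qmat E).rank ≤
      Module.finrank ℝ
        (LinearMap.ker (Matrix.toLin'
          (Qmat (powerEdges E k s r) -
            ((r : ℝ) - (k : ℝ) * (s : ℝ)) • (1 : Matrix _ _ ℝ)))) := by
  classical
  have hpos : 0 < r - k * s := Nat.sub_pos_of_lt hr
  set E' := powerEdges E k s r with hE'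
  have hginj := gEdge_injective E k s r hpos
  have hmem : ∀ e : {x // x ∈ E}, gEdge E k s r e ∈ E' := fun e =>
    Finset.mem_image_of_mem _ (Finset.mem_attach _ _)
  set φ : {x // x ∈ E} → {x // x ∈ E'} := fun e => ⟨gEdge E k s r e, hmem e⟩ with hφ
  have hφbij : Function.Bijective φ := by
    constructor
    · intro a b hab
      exact hginj (congrArg Subtype.val hab)
    · rintro ⟨e', he'⟩
      rw [hE', powerEdges_eq, Finset.mem_image] at he'
      obtain ⟨e, -, he⟩ := he'
      exact ⟨e, Subtype.ext he⟩
  set L : ({x // x ∈ E} → ℝ) →ₗ[ℝ]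
      ((V × Fin s ⊕ {e // e ∈ E} × Fin (r - k * s)) → ℝ) :=
    { toFun := fun x => Sum.elim (fun _ => 0) (fun p => x p.1)
      map_add' := by intro x y; funext w; cases w <;> simp
      map_smul' := by intro c x; funext w; cases w <;> simp } with hL
  have hLinj : Function.Injective L := by
    intro x y hxy
    funext e
    have := congrFun hxy (Sum.inr (e, ⟨0, hpos⟩))
    simpa [hL] using this
  have hkey : ∀ x ∈ LinearMap.ker (inc E).mulVecLin,
      L x ∈ LinearMap.ker (Matrix.toLin'
        (Qmat E' - ((r : ℝ) - (k : ℝ) * (s : ℝ)) • (1 : Matrix _ _ ℝ))) := by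
    intro x hx
    have hx' : ∀ v : V, ∑ e : {x // x ∈ E}, (if v ∈ e.1 then (1:ℝ) else 0) * x e = 0 := by
      intro v
      have := congrFun (LinearMap.mem_ker.mp hx) v
      simpa [Matrix.mulVecLin_apply, Matrix.mulVec, dotProduct, inc] using this
    rw [LinearMap.mem_ker]
    funext w
    have hinner : ∀ e : {x // x ∈ E},
        ((inc E')ᵀ.mulVec (L x)) (φ e) = ((r : ℝ) - (k : ℝ) * (s : ℝ)) * x e := by
      intro e
      have heq : ((inc E')ᵀ.mulVec (L x)) (φ e)
          = ∑ u, (if u ∈ gEdge E k s r e then (1:ℝ) else 0) * (L x) u := by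
        simp [Matrix.mulVec, dotProduct, inc, transpose, hφ]
      rw [heq, Fintype.sum_sum_type]
      have h1 : ∀ p : V × Fin s,
          (if Sum.inl p ∈ gEdge E k s r e then (1:ℝ) else 0) * (L x) (Sum.inl p) = 0 := by
        intro p; simp [hL]
      have h2 : ∀ p : {e // e ∈ E} × Fin (r - k * s),
          (if Sum.inr p ∈ gEdge E k s r e then (1:ℝ) else 0) * (L x) (Sum.inr p)
            = if p.1 = e then x p.1 else 0 := by
        rintro ⟨f, j⟩
        by_cases hfe : f = e <;> simp [hL, mem_gEdge_inr, hfe]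
      have hsum : ∑ p : {e // e ∈ E} × Fin (r - k * s), (if p.1 = e then x p.1 else 0)
          = ((r - k * s : ℕ) : ℝ) * x e := by
        rw [Fintype.sum_prod_type]
        simp only [Finset.sum_const, Finset.card_univ, Fintype.card_fin, nsmul_eq_mul]
        rw [Finset.sum_congr rfl (fun f _ => by rw [mul_ite, mul_zero])]
        rw [Finset.sum_ite_eq' Finset.univ e (fun f => ((r - k * s : ℕ) : ℝ) * x f)]
        simp
      rw [Finset.sum_congr rfl (fun p _ => h1 p), Finset.sum_congr rfl (fun p _ => h2 p),
        Finset.sum_const_zero, zero_add, hsum, Nat.cast_sub hr.le]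
      push_cast
      ring
    have houter : (Qmat E').mulVec (L x) w
        = ∑ e : {x // x ∈ E}, (if w ∈ gEdge E k s r e then (1:ℝ) else 0)
            * (((r : ℝ) - (k : ℝ) * (s : ℝ)) * x e) := by
      have heq : (Qmat E').mulVec (L x) w = ∑ e' : {x // x ∈ E'},
          (if w ∈ e'.1 then (1:ℝ) else 0) * ((inc E')ᵀ.mulVec (L x)) e' := by
        rw [Qmat, ← Matrix.mulVec_mulVec]
        simp only [Matrix.mulVec, dotProduct, inc]
      rw [heq]
      refine (Fintype.sum_bijective φ hφbij _ _ (fun e => ?_)).symm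
      rw [hinner e]
    have hsub : (Matrix.toLin' (Qmat E' - ((r:ℝ)-(k:ℝ)*(s:ℝ)) • (1 : Matrix _ _ ℝ))) (L x) w
        = (Qmat E').mulVec (L x) w - ((r:ℝ)-(k:ℝ)*(s:ℝ)) * (L x) w := by
      rw [Matrix.toLin'_apply, Matrix.sub_mulVec, Matrix.smul_mulVec, Matrix.one_mulVec]
      simp only [Pi.sub_apply, Pi.smul_apply, smul_eq_mul]
    rw [hsub, houter]
    cases w with
    | inl p =>
      obtain ⟨v, i⟩ := p
      simp only [mem_gEdge_inl]
      have hfac : ∑ e : {x // x ∈ E}, (if v ∈ e.1 then (1:ℝ) else 0)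
            * (((r:ℝ)-(k:ℝ)*(s:ℝ)) * x e)
          = ((r:ℝ)-(k:ℝ)*(s:ℝ)) * ∑ e : {x // x ∈ E}, (if v ∈ e.1 then (1:ℝ) else 0) * x e := by
        rw [Finset.mul_sum]; exact Finset.sum_congr rfl fun e _ => by ring
      rw [hfac, hx' v]
      simp [hL]
    | inr p =>
      obtain ⟨f, j⟩ := p
      simp only [mem_gEdge_inr, ite_mul, one_mul, zero_mul]
      rw [Finset.sum_ite_eq Finset.univ f (fun e => ((r:ℝ)-(k:ℝ)*(s:ℝ)) * x e)]
      simp [hL]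
  set M := Qmat E' - ((r:ℝ)-(k:ℝ)*(s:ℝ)) • (1 : Matrix _ _ ℝ) with hM
  let F : LinearMap.ker (inc E).mulVecLin →ₗ[ℝ] LinearMap.ker (Matrix.toLin' M) :=
    (L.comp (Submodule.subtype _)).codRestrict _ (fun y => hkey y.1 y.2)
  have hFinj : Function.Injective F := by
    intro a b hab
    exact Subtype.ext (hLinj (congrArg Subtype.val hab))
  have hle : Module.finrank ℝ (LinearMap.ker (inc E).mulVecLin)
      ≤ Module.finrank ℝ (LinearMap.ker (Matrix.toLin' M)) :=
    LinearMap.finrank_le_finrank_of_injective hFinj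
  have hrank : (Qmat E).rank = (inc E).rank := Matrix.rank_self_mul_transpose _
  have hrank2 : (inc E).rank
      = Module.finrank ℝ (LinearMap.range (inc E).mulVecLin) := rfl
  have hnull := LinearMap.finrank_range_add_finrank_ker ((inc E).mulVecLin)
  rw [Module.finrank_fintype_fun_eq_card, Fintype.card_coe] at hnull
  omega
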